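/- Let Ω, Ψ, φ : ℝ × ℝ² → ℂ be smooth functions of (t,x,y) and let β be a real constant. Suppose Ω satisfies the Rossby wave equation ∂ₜΩ + {Ψ, Ω} + β ∂ₓΨ = 0, and φ satisfies ∂ₜφ + {Ψ, φ} = 0. Then for every complex constant λ, the function ψ := {Ω, φ} − β ∂ₓφ − λφ also satisfies ∂ₜψ + {Ψ, ψ} = 0. (This is the compatibility of the Lax pair L φ = {Ω, φ} − β∂ₓφ = λφ, ∂ₜφ + {Ψ, φ} = 0, for the Rossby wave equation.) -/

import Mathlib

/-- Partial derivative in time of a function of (t,x,y). -/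
noncomputable def pt (f : ℝ → ℝ → ℝ → ℂ) (t x y : ℝ) : ℂ :=
  deriv (fun s => f s x y) t

/-- Partial derivative in x of a function of (t,x,y). -/
noncomputable def px (f : ℝ → ℝ → ℝ → ℂ) (t x y : ℝ) : ℂ :=
  deriv (fun a => f t a y) x

/-- Partial derivative in y of a function of (t,x,y). -/
noncomputable def py (f : ℝ → ℝ → ℝ → ℂ) (t x y : ℝ) : ℂ :=
  deriv (fun b => f t x b) y

/-- The bracket {f,g} = (∂ₓf)(∂_y g) − (∂_y f)(∂ₓ g) (spatial variables only). -/
noncomputable def bracket (f g : ℝ → ℝ → ℝ → ℂ) (t x y : ℝ) : ℂ :=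
  px f t x y * py g t x y - py f t x y * px g t x y

noncomputable def DD (F : ℝ × ℝ × ℝ → ℂ) (v p : ℝ × ℝ × ℝ) : ℂ := fderiv ℝ F p v

lemma pt_eq {F : ℝ × ℝ × ℝ → ℂ} (hF : Differentiable ℝ F) {f : ℝ → ℝ → ℝ → ℂ}
    (hf : ∀ t x y, f t x y = F (t, x, y)) (t x y : ℝ) :
    pt f t x y = DD F (1, 0, 0) (t, x, y) := by
  have h1 : HasFDerivAt F (fderiv ℝ F (t, x, y)) (t, x, y) := (hF _).hasFDerivAt
  have h2 : HasDerivAt (fun s : ℝ => ((s, x, y) : ℝ × ℝ × ℝ)) (1, 0, 0) t :=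
    (hasDerivAt_id t).prodMk (hasDerivAt_const t ((x, y) : ℝ × ℝ))
  have h3 := h1.comp_hasDerivAt t h2
  have e : (fun s => f s x y) = fun s => F (s, x, y) := funext fun s => hf s x y
  unfold pt
  rw [e]
  exact h3.deriv

lemma px_eq {F : ℝ × ℝ × ℝ → ℂ} (hF : Differentiable ℝ F) {f : ℝ → ℝ → ℝ → ℂ}
    (hf : ∀ t x y, f t x y = F (t, x, y)) (t x y : ℝ) :
    px f t x y = DD F (0, 1, 0) (t, x, y) := by
  have h1 : HasFDerivAt F (fderiv ℝ F (t, x, y)) (t, x, y) := (hF _).hasFDerivAt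
  have h2 : HasDerivAt (fun a : ℝ => ((t, a, y) : ℝ × ℝ × ℝ)) (0, 1, 0) x :=
    (hasDerivAt_const x t).prodMk ((hasDerivAt_id x).prodMk (hasDerivAt_const x y))
  have h3 := h1.comp_hasDerivAt x h2
  have e : (fun a => f t a y) = fun a => F (t, a, y) := funext fun a => hf t a y
  unfold px
  rw [e]
  exact h3.deriv

lemma py_eq {F : ℝ × ℝ × ℝ → ℂ} (hF : Differentiable ℝ F) {f : ℝ → ℝ → ℝ → ℂ}
    (hf : ∀ t x y, f t x y = F (t, x, y)) (t x y : ℝ) :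
    py f t x y = DD F (0, 0, 1) (t, x, y) := by
  have h1 : HasFDerivAt F (fderiv ℝ F (t, x, y)) (t, x, y) := (hF _).hasFDerivAt
  have h2 : HasDerivAt (fun b : ℝ => ((t, x, b) : ℝ × ℝ × ℝ)) (0, 0, 1) y :=
    (hasDerivAt_const y t).prodMk ((hasDerivAt_const y x).prodMk (hasDerivAt_id y))
  have h3 := h1.comp_hasDerivAt y h2
  have e : (fun b => f t x b) = fun b => F (t, x, b) := funext fun b => hf t x b
  unfold py
  rw [e]
  exact h3.deriv

lemma bracket_eq {F G : ℝ × ℝ × ℝ → ℂ} (hF : Differentiable ℝ F) (hG : Differentiable ℝ G)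
    {f g : ℝ → ℝ → ℝ → ℂ}
    (hf : ∀ t x y, f t x y = F (t, x, y)) (hg : ∀ t x y, g t x y = G (t, x, y)) (t x y : ℝ) :
    bracket f g t x y = DD F (0, 1, 0) (t, x, y) * DD G (0, 0, 1) (t, x, y)
      - DD F (0, 0, 1) (t, x, y) * DD G (0, 1, 0) (t, x, y) := by
  unfold bracket
  rw [px_eq hF hf, py_eq hG hg, py_eq hF hf, px_eq hG hg]


lemma contDiff_DD {F : ℝ × ℝ × ℝ → ℂ} (hF : ContDiff ℝ (⊤ : ℕ∞) F) (v : ℝ × ℝ × ℝ) :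
    ContDiff ℝ (⊤ : ℕ∞) (DD F v) :=
  (hF.fderiv_right (by simp)).clm_apply contDiff_const

lemma DD_mul {G H : ℝ × ℝ × ℝ → ℂ} (hG : Differentiable ℝ G) (hH : Differentiable ℝ H)
    (v p : ℝ × ℝ × ℝ) :
    DD (fun q => G q * H q) v p = DD G v p * H p + G p * DD H v p := by
  unfold DD
  rw [fderiv_fun_mul (hG p) (hH p)]
  simp
  ring

lemma DD_sub {G H : ℝ × ℝ × ℝ → ℂ} (hG : Differentiable ℝ G) (hH : Differentiable ℝ H)
    (v p : ℝ × ℝ × ℝ) :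
    DD (fun q => G q - H q) v p = DD G v p - DD H v p := by
  unfold DD; rw [fderiv_fun_sub (hG p) (hH p)]; simp

lemma DD_add {G H : ℝ × ℝ × ℝ → ℂ} (hG : Differentiable ℝ G) (hH : Differentiable ℝ H)
    (v p : ℝ × ℝ × ℝ) :
    DD (fun q => G q + H q) v p = DD G v p + DD H v p := by
  unfold DD; rw [fderiv_fun_add (hG p) (hH p)]; simp

lemma DD_const_mul {G : ℝ × ℝ × ℝ → ℂ} (hG : Differentiable ℝ G) (c : ℂ)
    (v p : ℝ × ℝ × ℝ) :
    DD (fun q => c * G q) v p = c * DD G v p := by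
  unfold DD; rw [fderiv_const_mul (hG p) c]; simp

lemma DD_comm {F : ℝ × ℝ × ℝ → ℂ} (hF : ContDiff ℝ (⊤ : ℕ∞) F) (v w p : ℝ × ℝ × ℝ) :
    DD (DD F v) w p = DD (DD F w) v p := by
  have hd : ∀ q, HasFDerivAt F (fderiv ℝ F q) q :=
    fun q => (hF.differentiable (by simp) q).hasFDerivAt
  have h2 : HasFDerivAt (fderiv ℝ F) (fderiv ℝ (fderiv ℝ F) p) p :=
    ((hF.fderiv_right (m := (⊤ : ℕ∞)) (by simp)).differentiable (by simp) p).hasFDerivAt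
  have hsymm := second_derivative_symmetric hd h2 v w
  have key : ∀ (u z : ℝ × ℝ × ℝ),
      fderiv ℝ (fun r => fderiv ℝ F r u) p z = fderiv ℝ (fderiv ℝ F) p z u := by
    intro u z
    rw [fderiv_clm_apply ((hF.fderiv_right (m := (⊤ : ℕ∞)) (by simp)).differentiable (by simp) p) (differentiableAt_const u)]
    simp
  unfold DD
  rw [key v w, key w v]
  exact hsymm.symm

/-- Compatibility of the Lax pair of the Rossby wave equation: if
`∂ₜΩ + {Ψ,Ω} + β∂ₓΨ = 0` and `∂ₜφ + {Ψ,φ} = 0`, then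
`ψ := {Ω,φ} − β∂ₓφ − λφ` satisfies `∂ₜψ + {Ψ,ψ} = 0`. -/
theorem lax_pair_rossby
    (Ω Ψ φ : ℝ → ℝ → ℝ → ℂ) (β : ℝ)
    (hΩ : ContDiff ℝ (⊤ : ℕ∞) (fun q : ℝ × ℝ × ℝ => Ω q.1 q.2.1 q.2.2))
    (hΨ : ContDiff ℝ (⊤ : ℕ∞) (fun q : ℝ × ℝ × ℝ => Ψ q.1 q.2.1 q.2.2))
    (hφ : ContDiff ℝ (⊤ : ℕ∞) (fun q : ℝ × ℝ × ℝ => φ q.1 q.2.1 q.2.2))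
    (hrossby : ∀ t x y : ℝ,
      pt Ω t x y + bracket Ψ Ω t x y + (β : ℂ) * px Ψ t x y = 0)
    (haux : ∀ t x y : ℝ, pt φ t x y + bracket Ψ φ t x y = 0)
    (lam : ℂ) :
    ∀ t x y : ℝ,
      pt (fun t' x' y' =>
          bracket Ω φ t' x' y' - (β : ℂ) * px φ t' x' y' - lam * φ t' x' y') t x y
      + bracket Ψ (fun t' x' y' =>
          bracket Ω φ t' x' y' - (β : ℂ) * px φ t' x' y' - lam * φ t' x' y') t x y = 0 := by
  intro t x y
  set FΩ : ℝ × ℝ × ℝ → ℂ := fun q => Ω q.1 q.2.1 q.2.2 with hFΩ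
  set FΨ : ℝ × ℝ × ℝ → ℂ := fun q => Ψ q.1 q.2.1 q.2.2 with hFΨ
  set Fφ : ℝ × ℝ × ℝ → ℂ := fun q => φ q.1 q.2.1 q.2.2 with hFφ
  set et : ℝ × ℝ × ℝ := (1, 0, 0) with het
  set ex : ℝ × ℝ × ℝ := (0, 1, 0) with hex
  set ey : ℝ × ℝ × ℝ := (0, 0, 1) with hey
  have dΩ : Differentiable ℝ FΩ := hΩ.differentiable (by simp)
  have dΨ : Differentiable ℝ FΨ := hΨ.differentiable (by simp)
  have dφ : Differentiable ℝ Fφ := hφ.differentiable (by simp)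
  have dΩt : Differentiable ℝ (DD FΩ et) := (contDiff_DD hΩ et).differentiable (by simp)
  have dΩx : Differentiable ℝ (DD FΩ ex) := (contDiff_DD hΩ ex).differentiable (by simp)
  have dΩy : Differentiable ℝ (DD FΩ ey) := (contDiff_DD hΩ ey).differentiable (by simp)
  have dΨx : Differentiable ℝ (DD FΨ ex) := (contDiff_DD hΨ ex).differentiable (by simp)
  have dΨy : Differentiable ℝ (DD FΨ ey) := (contDiff_DD hΨ ey).differentiable (by simp)
  have dφt : Differentiable ℝ (DD Fφ et) := (contDiff_DD hφ et).differentiable (by simp)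
  have dφx : Differentiable ℝ (DD Fφ ex) := (contDiff_DD hφ ex).differentiable (by simp)
  have dφy : Differentiable ℝ (DD Fφ ey) := (contDiff_DD hφ ey).differentiable (by simp)
  have cΩ : ∀ t' x' y' : ℝ, Ω t' x' y' = FΩ (t', x', y') := fun _ _ _ => rfl
  have cΨ : ∀ t' x' y' : ℝ, Ψ t' x' y' = FΨ (t', x', y') := fun _ _ _ => rfl
  have cφ : ∀ t' x' y' : ℝ, φ t' x' y' = Fφ (t', x', y') := fun _ _ _ => rfl
  -- uncurried hypothesis: Rossby
  have hR0 : ∀ q : ℝ × ℝ × ℝ,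
      DD FΩ et q + (DD FΨ ex q * DD FΩ ey q - DD FΨ ey q * DD FΩ ex q)
        + (β : ℂ) * DD FΨ ex q = 0 := by
    intro q
    have h := hrossby q.1 q.2.1 q.2.2
    rw [pt_eq dΩ cΩ, bracket_eq dΨ dΩ cΨ cΩ, px_eq dΨ cΨ] at h
    exact h
  -- uncurried hypothesis: auxiliary
  have hA0 : ∀ q : ℝ × ℝ × ℝ,
      DD Fφ et q + (DD FΨ ex q * DD Fφ ey q - DD FΨ ey q * DD Fφ ex q) = 0 := by
    intro q
    have h := haux q.1 q.2.1 q.2.2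
    rw [pt_eq dφ cφ, bracket_eq dΨ dφ cΨ cφ] at h
    exact h
  -- derivatives of the hypotheses vanish
  have hRD : ∀ (v q : ℝ × ℝ × ℝ),
      DD (fun q => DD FΩ et q + (DD FΨ ex q * DD FΩ ey q - DD FΨ ey q * DD FΩ ex q)
        + (β : ℂ) * DD FΨ ex q) v q = 0 := by
    intro v q
    have hz : (fun q => DD FΩ et q + (DD FΨ ex q * DD FΩ ey q - DD FΨ ey q * DD FΩ ex q)
        + (β : ℂ) * DD FΨ ex q) = fun _ => (0 : ℂ) := funext hR0
    rw [hz]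
    unfold DD
    simp
  have hAD : ∀ (v q : ℝ × ℝ × ℝ),
      DD (fun q => DD Fφ et q + (DD FΨ ex q * DD Fφ ey q - DD FΨ ey q * DD Fφ ex q)) v q = 0 := by
    intro v q
    have hz : (fun q => DD Fφ et q + (DD FΨ ex q * DD Fφ ey q - DD FΨ ey q * DD Fφ ex q))
        = fun _ => (0 : ℂ) := funext hA0
    rw [hz]
    unfold DD
    simp
  -- expansions
  have hRexp : ∀ (v q : ℝ × ℝ × ℝ),
      DD (DD FΩ et) v q
        + (DD (DD FΨ ex) v q * DD FΩ ey q + DD FΨ ex q * DD (DD FΩ ey) v q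
          - (DD (DD FΨ ey) v q * DD FΩ ex q + DD FΨ ey q * DD (DD FΩ ex) v q))
        + (β : ℂ) * DD (DD FΨ ex) v q = 0 := by
    intro v q
    have h := hRD v q
    rw [DD_add (dΩt.fun_add ((dΨx.fun_mul dΩy).fun_sub (dΨy.fun_mul dΩx))) (dΨx.const_mul (β : ℂ)) v q,
        DD_add dΩt ((dΨx.fun_mul dΩy).fun_sub (dΨy.fun_mul dΩx)) v q,
        DD_sub (dΨx.fun_mul dΩy) (dΨy.fun_mul dΩx) v q,
        DD_mul dΨx dΩy v q, DD_mul dΨy dΩx v q,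
        DD_const_mul dΨx (β : ℂ) v q] at h
    exact h
  have hAexp : ∀ (v q : ℝ × ℝ × ℝ),
      DD (DD Fφ et) v q
        + (DD (DD FΨ ex) v q * DD Fφ ey q + DD FΨ ex q * DD (DD Fφ ey) v q
          - (DD (DD FΨ ey) v q * DD Fφ ex q + DD FΨ ey q * DD (DD Fφ ex) v q)) = 0 := by
    intro v q
    have h := hAD v q
    rw [DD_add dφt ((dΨx.fun_mul dφy).fun_sub (dΨy.fun_mul dφx)) v q,
        DD_sub (dΨx.fun_mul dφy) (dΨy.fun_mul dφx) v q,
        DD_mul dΨx dφy v q, DD_mul dΨy dφx v q] at h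
    exact h
  -- the uncurried ψ
  have dG : Differentiable ℝ (fun q => DD FΩ ex q * DD Fφ ey q - DD FΩ ey q * DD Fφ ex q
      - (β : ℂ) * DD Fφ ex q - lam * Fφ q) :=
    (((dΩx.fun_mul dφy).fun_sub (dΩy.fun_mul dφx)).fun_sub (dφx.const_mul (β : ℂ))).fun_sub (dφ.const_mul lam)
  have cψ : ∀ t' x' y' : ℝ,
      bracket Ω φ t' x' y' - (β : ℂ) * px φ t' x' y' - lam * φ t' x' y'
        = (fun q => DD FΩ ex q * DD Fφ ey q - DD FΩ ey q * DD Fφ ex q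
            - (β : ℂ) * DD Fφ ex q - lam * Fφ q) (t', x', y') := by
    intro t' x' y'
    rw [bracket_eq dΩ dφ cΩ cφ, px_eq dφ cφ]
  have hGexp : ∀ (v q : ℝ × ℝ × ℝ),
      DD (fun q => DD FΩ ex q * DD Fφ ey q - DD FΩ ey q * DD Fφ ex q
          - (β : ℂ) * DD Fφ ex q - lam * Fφ q) v q
      = (DD (DD FΩ ex) v q * DD Fφ ey q + DD FΩ ex q * DD (DD Fφ ey) v q)
        - (DD (DD FΩ ey) v q * DD Fφ ex q + DD FΩ ey q * DD (DD Fφ ex) v q)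
        - (β : ℂ) * DD (DD Fφ ex) v q - lam * DD Fφ v q := by
    intro v q
    rw [DD_sub (((dΩx.fun_mul dφy).fun_sub (dΩy.fun_mul dφx)).fun_sub (dφx.const_mul (β : ℂ)))
          (dφ.const_mul lam) v q,
        DD_sub ((dΩx.fun_mul dφy).fun_sub (dΩy.fun_mul dφx)) (dφx.const_mul (β : ℂ)) v q,
        DD_sub (dΩx.fun_mul dφy) (dΩy.fun_mul dφx) v q,
        DD_mul dΩx dφy v q, DD_mul dΩy dφx v q,
        DD_const_mul dφx (β : ℂ) v q, DD_const_mul dφ lam v q]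
  -- rewrite the goal
  rw [pt_eq dG cψ, bracket_eq dΨ dG cΨ cψ]
  rw [← het, ← hex, ← hey]
  rw [hGexp et (t, x, y), hGexp ex (t, x, y), hGexp ey (t, x, y)]
  rw [DD_comm hΩ ex et (t, x, y), DD_comm hΩ ey et (t, x, y),
      DD_comm hφ ey et (t, x, y), DD_comm hφ ex et (t, x, y),
      DD_comm hΩ ey ex (t, x, y), DD_comm hφ ey ex (t, x, y)]
  have hRx := hRexp ex (t, x, y)
  have hRy := hRexp ey (t, x, y)
  have hAx := hAexp ex (t, x, y)
  have hAy := hAexp ey (t, x, y)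
  have hAp := hA0 (t, x, y)
  rw [DD_comm hΩ ey ex (t, x, y), DD_comm hΨ ey ex (t, x, y)] at hRx
  rw [DD_comm hφ ey ex (t, x, y), DD_comm hΨ ey ex (t, x, y)] at hAx
  linear_combination (DD Fφ ey (t, x, y)) * hRx - (DD Fφ ex (t, x, y)) * hRy
    + (DD FΩ ex (t, x, y)) * hAy - (DD FΩ ey (t, x, y)) * hAx
    - (β : ℂ) * hAx - lam * hAp
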